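/- arXiv:math/9802093 — 4 statements merged into one kernel-verified Lean document; each statement's English description precedes it below -/
import Mathlib

section
/- A matrix M ∈ T^n(F₂) is fixed by all generators g_{ij}, 1 ≤ i ≤ j ≤ n−1, of the first G_n-action if and only if m_{ij} = m_{i+1,j+1} for all 1 ≤ i ≤ j ≤ n−1, i.e. iff M is constant along each diagonal. In particular the fixed subspace has dimension n. -/
/-- The generator `g_{ij}` of the first `G_n`-action (matrices encoded as functions
`ℕ → ℕ → ZMod 2`, indices from 1). -/
def gAct (i j : ℕ) (M : ℕ → ℕ → ZMod 2) : ℕ → ℕ → ZMod 2 :=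
  fun k l => if (k = i ∨ k = i + 1) ∧ (l = j ∨ l = j + 1) ∧ k ≤ l
    then M k l + (M i j + M (i + 1) (j + 1)) else M k l


lemma fixed_iff (n : ℕ) (M : ℕ → ℕ → ZMod 2) :
    (∀ i j, 1 ≤ i → i ≤ j → j ≤ n - 1 → gAct i j M = M) ↔
    (∀ i j, 1 ≤ i → i ≤ j → j ≤ n - 1 → M i j = M (i + 1) (j + 1)) := by
  constructor
  · intro h i j hi hij hj
    have h2 := congrFun (congrFun (h i j hi hij hj) i) j
    simp only [gAct] at h2
    rw [if_pos ⟨Or.inl trivial, Or.inl trivial, hij⟩] at h2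
    have : M i j + M (i+1) (j+1) = 0 := by linear_combination h2
    linear_combination this - (CharTwo.add_self_eq_zero (M (i+1) (j+1)))
  · intro h i j hi hij hj
    funext k l
    simp only [gAct]
    split
    · rw [← h i j hi hij hj]
      rw [CharTwo.add_self_eq_zero, add_zero]
    · rfl

lemma diag_val (n : ℕ) (M : ℕ → ℕ → ZMod 2)
    (hdiag : ∀ i j, 1 ≤ i → i ≤ j → j ≤ n - 1 → M i j = M (i + 1) (j + 1)) :
    ∀ k l, 1 ≤ k → k ≤ l → l ≤ n → M k l = M 1 (l - k + 1) := by
  intro k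
  induction k with
  | zero => intro l h; omega
  | succ k ih =>
    intro l h1 h2 h3
    rcases Nat.eq_zero_or_pos k with hk | hk
    · subst hk
      have : l - 1 + 1 = l := by omega
      rw [this]
    · have hd : M k (l - 1) = M (k + 1) (l - 1 + 1) := hdiag k (l - 1) hk (by omega) (by omega)
      have hl : l - 1 + 1 = l := by omega
      rw [hl] at hd
      rw [← hd, ih (l - 1) hk (by omega) (by omega)]
      congr 1
      omega

def fixEquiv (n : ℕ) : {M : ℕ → ℕ → ZMod 2 //
      (∀ k l, M k l ≠ 0 → 1 ≤ k ∧ k ≤ l ∧ l ≤ n) ∧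
      (∀ i j, 1 ≤ i → i ≤ j → j ≤ n - 1 → gAct i j M = M)} ≃ (Fin n → ZMod 2) where
  toFun M := fun d => M.1 1 (d.1 + 1)
  invFun v := ⟨fun k l => if h : 1 ≤ k ∧ k ≤ l ∧ l ≤ n then v ⟨l - k, by omega⟩ else 0, by
    constructor
    · intro k l h
      by_contra hc
      simp only at h
      rw [dif_neg hc] at h
      exact h rfl
    · refine (fixed_iff n _).2 ?_
      intro i j hi hij hj
      have c1 : 1 ≤ i ∧ i ≤ j ∧ j ≤ n := ⟨hi, hij, by omega⟩
      have c2 : 1 ≤ i + 1 ∧ i + 1 ≤ j + 1 ∧ j + 1 ≤ n := ⟨by omega, by omega, by omega⟩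
      rw [dif_pos c1, dif_pos c2]
      exact congrArg v (Fin.ext (show j - i = j + 1 - (i + 1) by omega))⟩
  left_inv := by
    intro ⟨M, hsupp, hfix⟩
    ext k l
    simp only
    split
    · rename_i h
      have := diag_val n M ((fixed_iff n M).1 hfix) k l h.1 h.2.1 h.2.2
      exact this.symm
    · rename_i h
      by_contra hc
      exact h (hsupp k l fun h0 => hc h0.symm)
  right_inv := by
    intro v
    funext d
    simp only
    have c : 1 ≤ 1 ∧ 1 ≤ d.1 + 1 ∧ d.1 + 1 ≤ n := ⟨le_refl 1, by omega, by omega⟩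
    rw [dif_pos c]
    exact congrArg v (Fin.ext (show d.1 + 1 - 1 = d.1 by omega))

/-- A matrix is fixed by all generators `g_{ij}`, `1 ≤ i ≤ j ≤ n-1`, iff it is constant
along each diagonal (`M i j = M (i+1) (j+1)`). In particular, the fixed subspace of
upper-triangular `n × n` matrices over `F₂` has `2^n` elements (dimension `n`). -/
theorem stmt_12 (n : ℕ) :
    (∀ M : ℕ → ℕ → ZMod 2,
      (∀ i j, 1 ≤ i → i ≤ j → j ≤ n - 1 → gAct i j M = M) ↔
      (∀ i j, 1 ≤ i → i ≤ j → j ≤ n - 1 → M i j = M (i + 1) (j + 1))) ∧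
    Nat.card {M : ℕ → ℕ → ZMod 2 //
      (∀ k l, M k l ≠ 0 → 1 ≤ k ∧ k ≤ l ∧ l ≤ n) ∧
      (∀ i j, 1 ≤ i → i ≤ j → j ≤ n - 1 → gAct i j M = M)} = 2 ^ n := by
  refine ⟨fixed_iff n, ?_⟩
  rw [Nat.card_congr (fixEquiv n)]
  simp [Nat.card_eq_fintype_card]
end

section
/- Define R_i ∈ T^n(F₂), 1 ≤ i ≤ n, by (R_i)_{kl} = 1 iff k ≤ i and l ≥ n+1−i (and k ≤ l). Then for every generator g_{ij} of the first G_n-action and every M ∈ T^n(F₂), the pairing (g_{ij}M, R_k) = (M, R_k), where (M,M') = Σ m_{ij}m'_{ij} over the upper triangle; i.e. each R_k is a dual invariant of the action. -/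
/-- `Rmat n i` is the indicator of the upper-right `i × (n+1-i)` rectangle: the
entries in the first `i` rows and the last `n+1-i` columns, i.e. `k ≤ i ≤ l`. -/
def Rmat (n i : ℕ) : ℕ → ℕ → ZMod 2 :=
  fun k l => if 1 ≤ k ∧ k ≤ i ∧ i ≤ l ∧ l ≤ n then 1 else 0

/-- The pairing `(M, M') = Σ_{i ≤ j} m_{ij} m'_{ij}` on upper-triangular matrices. -/
def pairing (n : ℕ) (M M' : ℕ → ℕ → ZMod 2) : ZMod 2 :=
  ∑ k ∈ Finset.range (n + 1), ∑ l ∈ Finset.range (n + 1), M k l * M' k l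

/-- Each rectangle matrix `R_κ` is a dual invariant of the first `G_n`-action:
`(g_{ij} M, R_κ) = (M, R_κ)` for every generator `g_{ij}` and every `M`. -/
theorem stmt_13 (n i j κ : ℕ) (M : ℕ → ℕ → ZMod 2)
    (hi : 1 ≤ i) (hij : i ≤ j) (hj : j ≤ n - 1) (hκ1 : 1 ≤ κ) (hκn : κ ≤ n) :
    pairing n (gAct i j M) (Rmat n κ) = pairing n M (Rmat n κ) := by
  have hj1 : j + 1 ≤ n := by omega
  have hi1 : i + 1 ≤ n := by omega
  rw [← sub_eq_zero]
  unfold pairing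
  rw [← Finset.sum_sub_distrib]
  simp only [← Finset.sum_sub_distrib]
  have hterm : ∀ k l : ℕ,
      gAct i j M k l * Rmat n κ k l - M k l * Rmat n κ k l =
      (if (k = i ∨ k = i + 1) ∧ (l = j ∨ l = j + 1) ∧ k ≤ l
        then (M i j + M (i + 1) (j + 1)) * Rmat n κ k l else 0) := by
    intro k l
    unfold gAct
    split_ifs with h <;> ring
  simp only [hterm]
  have hinner : ∀ k : ℕ,
      (∑ l ∈ Finset.range (n + 1),
        if (k = i ∨ k = i + 1) ∧ (l = j ∨ l = j + 1) ∧ k ≤ l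
          then (M i j + M (i + 1) (j + 1)) * Rmat n κ k l else 0) =
      (∑ l ∈ ({j, j + 1} : Finset ℕ),
        if (k = i ∨ k = i + 1) ∧ (l = j ∨ l = j + 1) ∧ k ≤ l
          then (M i j + M (i + 1) (j + 1)) * Rmat n κ k l else 0) := by
    intro k
    refine (Finset.sum_subset ?_ ?_).symm
    · intro l hl
      simp only [Finset.mem_insert, Finset.mem_singleton] at hl
      simp only [Finset.mem_range]; omega
    · intro l _ hl
      simp only [Finset.mem_insert, Finset.mem_singleton] at hl
      rw [if_neg]; push_neg at hl ⊢
      intro _; exact fun h => absurd h (by tauto)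
  simp only [hinner]
  have houter :
      (∑ k ∈ Finset.range (n + 1), ∑ l ∈ ({j, j + 1} : Finset ℕ),
        if (k = i ∨ k = i + 1) ∧ (l = j ∨ l = j + 1) ∧ k ≤ l
          then (M i j + M (i + 1) (j + 1)) * Rmat n κ k l else 0) =
      (∑ k ∈ ({i, i + 1} : Finset ℕ), ∑ l ∈ ({j, j + 1} : Finset ℕ),
        if (k = i ∨ k = i + 1) ∧ (l = j ∨ l = j + 1) ∧ k ≤ l
          then (M i j + M (i + 1) (j + 1)) * Rmat n κ k l else 0) := by
    refine (Finset.sum_subset ?_ ?_).symm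
    · intro k hk
      simp only [Finset.mem_insert, Finset.mem_singleton] at hk
      simp only [Finset.mem_range]; omega
    · intro k _ hk
      simp only [Finset.mem_insert, Finset.mem_singleton] at hk
      refine Finset.sum_eq_zero fun l _ => ?_
      rw [if_neg]
      exact fun h => absurd h.1 (by tauto)
  rw [houter]
  rw [Finset.sum_pair (show i ≠ i + 1 by omega)]
  rw [Finset.sum_pair (show j ≠ j + 1 by omega),
      Finset.sum_pair (show j ≠ j + 1 by omega)]
  unfold Rmat
  clear hterm hinner houter
  generalize M i j + M (i + 1) (j + 1) = t
  rcases Nat.lt_or_ge i j with hlt | hge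
  · split_ifs <;> first | omega | (revert t; decide)
  · have : i = j := le_antisymm hij hge
    subst this
    split_ifs <;> first | omega | (revert t; decide)
end

section
/- The system of (n−1 choose 2) + (n−1) = (n choose 2) equations m'_{ij} + m'_{i,j+1} + m'_{i+1,j} + m'_{i+1,j+1} = 0 over F₂ for 1 ≤ i ≤ j ≤ n−1 (with entries outside the upper triangle set to 0) on T^n(F₂) has solution space of dimension exactly n, with basis R₁,…,R_n, where R_i is the indicator of the upper-right i×(n+1−i) rectangle. -/
lemma four_zmod2 : ∀ a b c d : ZMod 2, a + b + c + d = 0 → b = a + c + d := by decide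

lemma key_lemma (n : ℕ) (M : ℕ → ℕ → ZMod 2)
    (hsupp : ∀ k l, M k l ≠ 0 → 1 ≤ k ∧ k ≤ l ∧ l ≤ n)
    (heq : ∀ i j, 1 ≤ i → i ≤ j → j ≤ n - 1 →
      M i j + M i (j + 1) + M (i + 1) j + M (i + 1) (j + 1) = 0) :
    ∀ d k l, 1 ≤ k → l ≤ n → l ≤ k + d → M k l = ∑ i ∈ Finset.Icc k l, M i i := by
  intro d
  induction d with
  | zero =>
    intro k l hk hln hle
    rcases Nat.lt_or_ge l k with h | h
    · rw [Finset.Icc_eq_empty (by omega), Finset.sum_empty]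
      by_contra hne
      exact absurd (hsupp k l hne).2.1 (by omega)
    · have : k = l := by omega
      subst this
      rw [Finset.Icc_self, Finset.sum_singleton]
  | succ d ih =>
    intro k l hk hln hle
    by_cases hl : l ≤ k + d
    · exact ih k l hk hln hl
    have hl' : l = k + d + 1 := by omega
    have hkl : k < l := by omega
    have h1 : M k (l-1) = ∑ i ∈ Finset.Icc k (l-1), M i i := ih k (l-1) hk (by omega) (by omega)
    have h2 : M (k+1) (l-1) = ∑ i ∈ Finset.Icc (k+1) (l-1), M i i :=
      ih (k+1) (l-1) (by omega) (by omega) (by omega)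
    have h3 : M (k+1) l = ∑ i ∈ Finset.Icc (k+1) l, M i i :=
      ih (k+1) l (by omega) hln (by omega)
    have he := heq k (l-1) hk (by omega) (by omega)
    rw [show l - 1 + 1 = l by omega] at he
    have hX : M k l = M k (l-1) + M (k+1) (l-1) + M (k+1) l := four_zmod2 _ _ _ _ he
    rw [hX, h1, h2, h3]
    rw [Finset.Icc_add_one_left_eq_Ioc, Finset.Icc_add_one_left_eq_Ioc]
    rw [Finset.Icc_eq_cons_Ioc (by omega), Finset.sum_cons,
        Finset.Icc_eq_cons_Ioc (by omega : k ≤ l), Finset.sum_cons]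
    have hsplit : ∑ i ∈ Finset.Ioc k l, M i i
        = ∑ i ∈ Finset.Ioc k (l-1), M i i + M l l := by
      have := Finset.sum_Ioc_succ_top (f := fun i => M i i) (by omega : k ≤ l - 1) 
      rw [show l - 1 + 1 = l by omega] at this
      exact this
    rw [hsplit]
    have hBB : (∑ i ∈ Finset.Ioc k (l-1), M i i) + (∑ i ∈ Finset.Ioc k (l-1), M i i) = 0 := by
      have : ∀ x : ZMod 2, x + x = 0 := by decide
      exact this _
    linear_combination hBB

lemma rect_zero (n m i j : ℕ) (hi : 1 ≤ i) (hij : i ≤ j) (hjn : j ≤ n - 1) :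
    Rmat n m i j + Rmat n m i (j+1) + Rmat n m (i+1) j + Rmat n m (i+1) (j+1) = 0 := by
  unfold Rmat
  split_ifs <;> first | rfl | decide | omega

lemma diag_lemma (n : ℕ) (c : Fin n → ZMod 2) (s : Fin n) :
    ∑ t : Fin n, c t * Rmat n (t.val + 1) (s.val + 1) (s.val + 1) = c s := by
  rw [Finset.sum_eq_single s]
  · unfold Rmat
    rw [if_pos ⟨by omega, le_refl _, le_refl _, s.2⟩, mul_one]
  · intro t _ hts
    unfold Rmat
    rw [if_neg, mul_zero]
    rintro ⟨-, h2, h3, -⟩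
    exact hts (Fin.ext (by omega))
  · intro h; exact absurd (Finset.mem_univ s) h

lemma sum_zero_outside (n k l : ℕ) (c : Fin n → ZMod 2) (h : ¬(1 ≤ k ∧ k ≤ l ∧ l ≤ n)) :
    ∑ t : Fin n, c t * Rmat n (t.val + 1) k l = 0 := by
  apply Finset.sum_eq_zero
  intro t _
  unfold Rmat
  rw [if_neg, mul_zero]
  rintro ⟨h1, h2, h3, h4⟩
  exact h ⟨h1, le_trans h2 h3, h4⟩

/-- An upper-triangular `n × n` matrix `M` over `F₂` satisfies all the equations
`m_{ij} + m_{i,j+1} + m_{i+1,j} + m_{i+1,j+1} = 0`, `1 ≤ i ≤ j ≤ n-1` (entries outside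
the upper triangle being `0`), if and only if it is a unique `F₂`-linear combination
of `R₁, …, R_n`; i.e. the solution space has dimension exactly `n` with basis the `R_i`. -/
theorem stmt_14 (n : ℕ) (M : ℕ → ℕ → ZMod 2) :
    ((∀ k l, M k l ≠ 0 → 1 ≤ k ∧ k ≤ l ∧ l ≤ n) ∧
     (∀ i j, 1 ≤ i → i ≤ j → j ≤ n - 1 →
       M i j + M i (j + 1) + M (i + 1) j + M (i + 1) (j + 1) = 0)) ↔
    (∃! c : Fin n → ZMod 2, M = fun k l => ∑ t : Fin n, c t * Rmat n (t.val + 1) k l) := by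
  constructor
  · rintro ⟨hsupp, heq⟩
    refine ⟨fun t => M (t.val + 1) (t.val + 1), ?_, ?_⟩
    · funext k l
      by_cases h : 1 ≤ k ∧ k ≤ l ∧ l ≤ n
      · obtain ⟨hk, hkl, hln⟩ := h
        rw [key_lemma n M hsupp heq l k l hk hln (by omega)]
        rw [Fin.sum_univ_eq_sum_range (fun i => M (i+1) (i+1) * Rmat n (i+1) k l)]
        have hstep : ∀ i ∈ Finset.range n,
            M (i+1) (i+1) * Rmat n (i+1) k l
              = if i ∈ Finset.Icc (k-1) (l-1) then M (i+1) (i+1) else 0 := by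
          intro i _
          unfold Rmat
          by_cases hmem : k - 1 ≤ i ∧ i ≤ l - 1
          · rw [if_pos (Finset.mem_Icc.2 hmem), if_pos ⟨hk, by omega, by omega, hln⟩, mul_one]
          · rw [if_neg (fun hc => hmem (Finset.mem_Icc.1 hc)),
                if_neg (by rintro ⟨-, h2, h3, -⟩; exact hmem ⟨by omega, by omega⟩), mul_zero]
        have hsub : Finset.Icc (k-1) (l-1) ⊆ Finset.range n := by
          intro i hi
          rw [Finset.mem_Icc] at hi
          rw [Finset.mem_range]
          omega
        rw [Finset.sum_congr rfl hstep, Finset.sum_ite_mem, Finset.inter_eq_right.2 hsub]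
        have hmap : Finset.Icc k l = (Finset.Icc (k-1) (l-1)).map (addRightEmbedding 1) := by
          rw [Finset.map_add_right_Icc]
          congr 1 <;> omega
        rw [hmap, Finset.sum_map]
        simp [addRightEmbedding_apply]
      · have h0 : (∑ t : Fin n, (fun t : Fin n => M (t.val+1) (t.val+1)) t * Rmat n (t.val + 1) k l) = 0 :=
          sum_zero_outside n k l _ h
        rw [h0]
        by_contra hne
        exact h (hsupp k l hne)
    · intro c' hc'
      funext s
      rw [hc']
      exact (diag_lemma n c' s).symm
  · rintro ⟨c, hc, -⟩
    subst hc
    constructor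
    · intro k l hne
      by_contra h
      have h0 : (∑ t : Fin n, (fun t : Fin n => c t) t * Rmat n (t.val + 1) k l) = 0 :=
        sum_zero_outside n k l _ h
      exact hne h0
    · intro i j hi hij hjn
      simp only
      rw [← Finset.sum_add_distrib, ← Finset.sum_add_distrib, ← Finset.sum_add_distrib]
      apply Finset.sum_eq_zero
      intro t _
      rw [← mul_add, ← mul_add, ← mul_add, rect_zero n (t.val+1) i j hi hij hjn, mul_zero]
end

section
/- Let H be a finite graph and let V be the F₂-vector space of F₂-valued functions on the vertices of H, with bilinear form ⟨f,g⟩ = Σ_{(u,v) edge} (f(u)g(v) + f(v)g(u)). Let Q(f) = |supp f| + e(supp f) mod 2, where e(S) is the number of edges of H with both endpoints in S. Then Q is a quadratic function for ⟨·,·⟩: Q(f+g) = Q(f) + Q(g) + ⟨f,g⟩. -/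
/-! Over `𝔽₂` the indicator of `supp f` is `f` itself, so both counts in `Q f` become sums:
`Q f = Σ_v f v + Σ_{uv ∈ E} f u f v`. Expanding `(f + g) u (f + g) v` on each edge leaves the
cross term `f u g v + f v g u`, and summing it over the edges is summing `f u g v` over the
darts, i.e. over ordered adjacent pairs. -/

/-- The quadratic function of a graph: `Q f = |supp f| + e(supp f) mod 2`, where
`e(S)` is the number of edges with both endpoints in `S`. -/
noncomputable def Qfun {W : Type} (G : SimpleGraph W) (f : W → ZMod 2) : ZMod 2 :=
  ((Set.ncard {v | f v = 1} +
    Set.ncard {e : Sym2 W | e ∈ G.edgeSet ∧ ∀ v ∈ e, f v = 1} : ℕ) : ZMod 2)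

open Finset

theorem ZMod.natCast_card_filter_eq_one {ι : Type*} (s : Finset ι) (f : ι → ZMod 2) :
    ((#{x ∈ s | f x = 1} : ℕ) : ZMod 2) = ∑ x ∈ s, f x := by
  rw [natCast_card_filter]
  refine sum_congr rfl fun x _ => ?_
  generalize f x = a
  revert a
  decide

namespace SimpleGraph

variable {V : Type*} [Fintype V] (G : SimpleGraph V) [DecidableRel G.Adj]

theorem sum_adj_eq_sum_darts {R : Type*} [AddCommMonoid R] (F : V → V → R) :
    ∑ u, ∑ v, (if G.Adj u v then F u v else 0) = ∑ d : G.Dart, F d.fst d.snd := by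
  rw [← sum_product', sum_ite, sum_const_zero, add_zero]
  exact sum_bij' (fun p hp => ⟨p, (mem_filter.1 hp).2⟩) (fun d _ => d.toProd)
    (by simp) (by simp) (by simp) (by simp) (by simp)

theorem sum_adj_eq_sum_edgeFinset {R : Type*} [AddCommMonoid R] (F : V → V → R) :
    ∑ u, ∑ v, (if G.Adj u v then F u v else 0) =
      ∑ e ∈ G.edgeFinset, Sym2.lift ⟨fun u v => F u v + F v u, fun _ _ => add_comm _ _⟩ e := by
  classical
  rw [sum_adj_eq_sum_darts, ← sum_fiberwise_of_maps_to (g := Dart.edge) (t := G.edgeFinset)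
    fun d _ => mem_edgeFinset.2 d.edge_mem]
  refine sum_congr rfl fun e he => ?_
  induction e with
  | _ u v =>
    let d : G.Dart := ⟨(u, v), mem_edgeFinset.1 he⟩
    rw [show s(u, v) = d.edge from rfl, d.edge_fiber, sum_pair d.symm_ne.symm]
    rfl

end SimpleGraph

theorem Qfun_eq_sum {V : Type} [Fintype V] (G : SimpleGraph V) [DecidableRel G.Adj]
    (f : V → ZMod 2) :
    Qfun G f = ∑ v, f v +
      ∑ e ∈ G.edgeFinset, Sym2.lift ⟨fun u v => f u * f v, fun _ _ => mul_comm _ _⟩ e := by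
  classical
  have hsupp : {v | f v = 1} = ↑(univ.filter fun v => f v = 1) := by ext; simp
  have hedges : {e : Sym2 V | e ∈ G.edgeSet ∧ ∀ v ∈ e, f v = 1} =
      ↑(G.edgeFinset.filter fun e =>
        Sym2.lift ⟨fun u v => f u * f v, fun _ _ => mul_comm _ _⟩ e = 1) := by
    ext e
    induction e with
    | _ u v => simp
  rw [Qfun, Nat.cast_add, hsupp, hedges, Set.ncard_coe_finset, Set.ncard_coe_finset,
    ZMod.natCast_card_filter_eq_one, ZMod.natCast_card_filter_eq_one]

/-- `Q` is a quadratic function for the bilinear form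
`⟨f,g⟩ = Σ_{(u,v) adjacent} f u * g v`: `Q(f+g) = Q f + Q g + ⟨f,g⟩`. -/
theorem stmt_15 (W : Type) [Fintype W] (G : SimpleGraph W) [DecidableRel G.Adj]
    (f g : W → ZMod 2) :
    Qfun G (f + g) = Qfun G f + Qfun G g +
      ∑ u : W, ∑ v : W, (if G.Adj u v then f u * g v else 0) := by
  have hedge : ∀ e : Sym2 W,
      Sym2.lift ⟨fun u v => (f + g) u * (f + g) v, fun _ _ => mul_comm _ _⟩ e =
        Sym2.lift ⟨fun u v => f u * f v, fun _ _ => mul_comm _ _⟩ e +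
        Sym2.lift ⟨fun u v => g u * g v, fun _ _ => mul_comm _ _⟩ e +
        Sym2.lift ⟨fun u v => f u * g v + f v * g u, fun _ _ => add_comm _ _⟩ e := by
    refine Sym2.ind fun u v => ?_
    simp only [Sym2.lift_mk, Pi.add_apply]
    ring
  rw [Qfun_eq_sum, Qfun_eq_sum, Qfun_eq_sum, G.sum_adj_eq_sum_edgeFinset]
  simp only [hedge, sum_add_distrib]
  simp only [Pi.add_apply, sum_add_distrib]
  ring
end
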